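/- Let (x*,y*) be a stationary point with dual solution (ρ*,w*,z*) and ρ* ∈ (0,1), and define F_I(α,β) = f_I(αw*+(1−α)x*, βz*+(1−β)y*) for I ∈ {R,C} and α,β ∈ [0,1]. Then: (1) for every fixed β ∈ [0,1], the function α ↦ F_C(α,β) is affine on [0,1] if and only if S_C(x*) ∩ S_C(w*) ≠ ∅; (2) for every fixed α ∈ [0,1], the function β ↦ F_R(α,β) is affine on [0,1] if and only if S_R(y*) ∩ S_R(z*) ≠ ∅. -/
import Mathlib


open scoped BigOperators Classical
open Matrix Filter

noncomputable section

namespace TS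

/-- The probability simplex in `ℝ^k`. -/
def Δ (k : ℕ) : Set (Fin k → ℝ) := {x | (∀ i, 0 ≤ x i) ∧ ∑ i, x i = 1}

/-- Maximum entry of a vector. -/
def vmax {k : ℕ} (u : Fin k → ℝ) : ℝ := ⨆ i, u i

/-- Maximum entry of a vector over an index set. -/
def vmaxOn {k : ℕ} (S : Set (Fin k)) (u : Fin k → ℝ) : ℝ := ⨆ i ∈ S, u i

/-- The support of a vector: indices with positive entries. -/
def supp {k : ℕ} (u : Fin k → ℝ) : Set (Fin k) := {i | 0 < u i}

/-- The set of indices where `u` attains its maximum entry. -/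
def suppmax {k : ℕ} (u : Fin k → ℝ) : Set (Fin k) := {i | ∀ j, u j ≤ u i}

/-- The set of indices where `u` attains its minimum entry. -/
def suppmin {k : ℕ} (u : Fin k → ℝ) : Set (Fin k) := {i | ∀ j, u i ≤ u j}

variable {m n : ℕ}

/-- `f_R(x,y) = max(Ry) − xᵀRy`. -/
def fR (R : Matrix (Fin m) (Fin n) ℝ) (x : Fin m → ℝ) (y : Fin n → ℝ) : ℝ :=
  vmax (R.mulVec y) - x ⬝ᵥ R.mulVec y

/-- `f_C(x,y) = max(Cᵀx) − xᵀCy`. -/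
def fC (C : Matrix (Fin m) (Fin n) ℝ) (x : Fin m → ℝ) (y : Fin n → ℝ) : ℝ :=
  vmax (Matrix.vecMul x C) - x ⬝ᵥ C.mulVec y

/-- `f(x,y) = max{f_R(x,y), f_C(x,y)}`. -/
def fNE (R C : Matrix (Fin m) (Fin n) ℝ) (x : Fin m → ℝ) (y : Fin n → ℝ) : ℝ :=
  max (fR R x y) (fC C x y)

/-- `S_R(y) = suppmax(Ry)`. -/
def SR (R : Matrix (Fin m) (Fin n) ℝ) (y : Fin n → ℝ) : Set (Fin m) := suppmax (R.mulVec y)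

/-- `S_C(x) = suppmax(Cᵀx)`. -/
def SC (C : Matrix (Fin m) (Fin n) ℝ) (x : Fin m → ℝ) : Set (Fin n) := suppmax (Matrix.vecMul x C)

/-- `g` has right (one-sided) derivative `d` at `0`: `lim_{θ→0⁺} (g θ − g 0)/θ = d`. -/
def HasPosDeriv (g : ℝ → ℝ) (d : ℝ) : Prop :=
  Tendsto (fun θ : ℝ => (g θ - g 0) / θ) (nhdsWithin 0 (Set.Ioi 0)) (nhds d)

/-- `(x,y)` is a stationary point: for every `(x',y')` in the product simplex, the scaled
directional derivative `Df(x,y,x',y')` of `f` exists and is nonnegative. -/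
def IsStationary (R C : Matrix (Fin m) (Fin n) ℝ) (x : Fin m → ℝ) (y : Fin n → ℝ) : Prop :=
  ∀ x' ∈ Δ m, ∀ y' ∈ Δ n, ∃ d : ℝ,
    HasPosDeriv (fun θ : ℝ => fNE R C (x + θ • (x' - x)) (y + θ • (y' - y))) d ∧ 0 ≤ d

/-- The function `T(x,y,x',y',ρ,w,z)`. -/
def Tfun (R C : Matrix (Fin m) (Fin n) ℝ) (x : Fin m → ℝ) (y : Fin n → ℝ)
    (x' : Fin m → ℝ) (y' : Fin n → ℝ) (ρ : ℝ) (w : Fin m → ℝ) (z : Fin n → ℝ) : ℝ :=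
  ρ * (w ⬝ᵥ R.mulVec y' - x ⬝ᵥ R.mulVec y' - x' ⬝ᵥ R.mulVec y + x ⬝ᵥ R.mulVec y)
    + (1 - ρ) * (x' ⬝ᵥ C.mulVec z - x ⬝ᵥ C.mulVec y' - x' ⬝ᵥ C.mulVec y + x ⬝ᵥ C.mulVec y)

/-- Feasibility for the tuple `(ρ,w,z)`: `ρ ∈ [0,1]`, `w ∈ Δ_m` with `supp w ⊆ S_R(y)`,
`z ∈ Δ_n` with `supp z ⊆ S_C(x)`. -/
def dualFeasible (R C : Matrix (Fin m) (Fin n) ℝ) (x : Fin m → ℝ) (y : Fin n → ℝ)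
    (ρ : ℝ) (w : Fin m → ℝ) (z : Fin n → ℝ) : Prop :=
  ρ ∈ Set.Icc (0:ℝ) 1 ∧ w ∈ Δ m ∧ supp w ⊆ SR R y ∧ z ∈ Δ n ∧ supp z ⊆ SC C x

/-- `max_{ρ,w,z} T(x,y,x',y',ρ,w,z)` over feasible `(ρ,w,z)`. -/
def innerMax (R C : Matrix (Fin m) (Fin n) ℝ) (x : Fin m → ℝ) (y : Fin n → ℝ)
    (x' : Fin m → ℝ) (y' : Fin n → ℝ) : ℝ :=
  sSup {t : ℝ | ∃ ρ w z, dualFeasible R C x y ρ w z ∧ t = Tfun R C x y x' y' ρ w z}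

/-- `V(x,y) = min_{(x',y') ∈ Δ_m×Δ_n} max_{ρ,w,z} T(x,y,x',y',ρ,w,z)`. -/
def Vval (R C : Matrix (Fin m) (Fin n) ℝ) (x : Fin m → ℝ) (y : Fin n → ℝ) : ℝ :=
  sInf {t : ℝ | ∃ x' ∈ Δ m, ∃ y' ∈ Δ n, t = innerMax R C x y x' y'}

/-- `min_{(x',y') ∈ Δ_m×Δ_n} T(x,y,x',y',ρ,w,z)`. -/
def innerMin (R C : Matrix (Fin m) (Fin n) ℝ) (x : Fin m → ℝ) (y : Fin n → ℝ)
    (ρ : ℝ) (w : Fin m → ℝ) (z : Fin n → ℝ) : ℝ :=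
  sInf {t : ℝ | ∃ x' ∈ Δ m, ∃ y' ∈ Δ n, t = Tfun R C x y x' y' ρ w z}

/-- `(ρ,w,z)` is a dual solution at `(x,y)`. -/
def IsDualSolution (R C : Matrix (Fin m) (Fin n) ℝ) (x : Fin m → ℝ) (y : Fin n → ℝ)
    (ρ : ℝ) (w : Fin m → ℝ) (z : Fin n → ℝ) : Prop :=
  dualFeasible R C x y ρ w z ∧ Vval R C x y = innerMin R C x y ρ w z

/-- `(x,y)` is an `ε`-approximate Nash equilibrium. -/
def IsEpsNash (R C : Matrix (Fin m) (Fin n) ℝ) (x : Fin m → ℝ) (y : Fin n → ℝ) (ε : ℝ) : Prop :=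
  (∀ x' ∈ Δ m, x' ⬝ᵥ R.mulVec y ≤ x ⬝ᵥ R.mulVec y + ε) ∧
  (∀ y' ∈ Δ n, x ⬝ᵥ C.mulVec y' ≤ x ⬝ᵥ C.mulVec y + ε)

/-- A Nash equilibrium is a `0`-approximate Nash equilibrium. -/
def IsNash (R C : Matrix (Fin m) (Fin n) ℝ) (x : Fin m → ℝ) (y : Fin n → ℝ) : Prop :=
  IsEpsNash R C x y 0

/-- `λ* = (w*−x*)ᵀRz*`. -/
def lamStar (R : Matrix (Fin m) (Fin n) ℝ) (xs ws : Fin m → ℝ) (zs : Fin n → ℝ) : ℝ :=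
  (ws - xs) ⬝ᵥ R.mulVec zs

/-- `μ* = w*ᵀC(z*−y*)`. -/
def muStar (C : Matrix (Fin m) (Fin n) ℝ) (ws : Fin m → ℝ) (ys zs : Fin n → ℝ) : ℝ :=
  ws ⬝ᵥ C.mulVec (zs - ys)

/-- `p* = f_R(x*,z*)/(f_R(x*,z*)+f_C(w*,z*)−f_R(w*,z*))` (`= 0` if the denominator is `0`,
by the real-division-by-zero convention). -/
def pstar (R C : Matrix (Fin m) (Fin n) ℝ) (xs ws : Fin m → ℝ) (zs : Fin n → ℝ) : ℝ :=
  fR R xs zs / (fR R xs zs + fC C ws zs - fR R ws zs)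

/-- `q* = f_C(w*,y*)/(f_C(w*,y*)+f_R(w*,z*)−f_C(w*,z*))` (`= 0` if the denominator is `0`). -/
def qstar (R C : Matrix (Fin m) (Fin n) ℝ) (ws : Fin m → ℝ) (ys zs : Fin n → ℝ) : ℝ :=
  fC C ws ys / (fC C ws ys + fR R ws zs - fC C ws zs)

/-- The adjusted pair `(ũ,ṽ)` of Method 3. -/
def tildeUV (R C : Matrix (Fin m) (Fin n) ℝ) (xs : Fin m → ℝ) (ys : Fin n → ℝ)
    (ws : Fin m → ℝ) (zs : Fin n → ℝ) : (Fin m → ℝ) × (Fin n → ℝ) :=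
  if fR R ws zs ≤ fC C ws zs then
    (pstar R C xs ws zs • ws + (1 - pstar R C xs ws zs) • xs, zs)
  else
    (ws, qstar R C ws ys zs • zs + (1 - qstar R C ws ys zs) • ys)


lemma le_vmax {k : ℕ} (u : Fin (k+1) → ℝ) (j : Fin (k+1)) : u j ≤ vmax u :=
  le_ciSup (Set.Finite.bddAbove (Set.finite_range u)) j

lemma vmax_eq {k : ℕ} {u : Fin (k+1) → ℝ} {i : Fin (k+1)} (h : ∀ j, u j ≤ u i) :
    vmax u = u i := le_antisymm (ciSup_le h) (le_vmax u i)

lemma affine_iff {k : ℕ} (u v : Fin (k+1) → ℝ) :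
    (∃ a c : ℝ, ∀ t ∈ Set.Icc (0:ℝ) 1, vmax (t • v + (1-t) • u) = a * t + c) ↔
    (suppmax u ∩ suppmax v).Nonempty := by
  constructor
  · rintro ⟨a, c, h⟩
    obtain ⟨i, hi⟩ := Finite.exists_max (fun j => u j + v j)
    have h0 := h 0 (by norm_num)
    have h1 := h 1 (by norm_num)
    have hh := h (1/2) (by norm_num)
    simp only [zero_smul, one_smul, sub_zero, sub_self, zero_add, add_zero] at h0 h1
    have hu0 : vmax u = c := by linarith
    have hv1 : vmax v = a + c := by linarith
    have hvm : vmax ((1/2:ℝ) • v + (1-(1/2:ℝ)) • u) = (1/2) * v i + (1/2) * u i := by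
      rw [vmax_eq (i := i) (fun j => by
        simp only [Pi.add_apply, Pi.smul_apply, smul_eq_mul]
        have := hi j; linarith)]
      simp only [Pi.add_apply, Pi.smul_apply, smul_eq_mul]; ring
    rw [hvm] at hh
    have hui : u i ≤ vmax u := le_vmax u i
    have hvi : v i ≤ vmax v := le_vmax v i
    have heu : u i = c := by linarith
    have hev : v i = a + c := by linarith
    exact ⟨i, fun j => by have := le_vmax u j; linarith,
      fun j => by have := le_vmax v j; linarith⟩
  · rintro ⟨i, hu, hv⟩
    refine ⟨v i - u i, u i, fun t ht => ?_⟩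
    rw [vmax_eq (i := i) (fun j => by
      simp only [Pi.add_apply, Pi.smul_apply, smul_eq_mul]
      have h1 : t * v j ≤ t * v i := mul_le_mul_of_nonneg_left (hv j) ht.1
      have h2 : (1-t) * u j ≤ (1-t) * u i :=
        mul_le_mul_of_nonneg_left (hu j) (by linarith [ht.2])
      linarith)]
    simp only [Pi.add_apply, Pi.smul_apply, smul_eq_mul]; ring

/-- affinity of the sections of `F_C` (resp. `F_R`) is equivalent to
`S_C(x*) ∩ S_C(w*) ≠ ∅` (resp. `S_R(y*) ∩ S_R(z*) ≠ ∅`). -/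
theorem stmt6 {m n : ℕ} (R C : Matrix (Fin (m+1)) (Fin (n+1)) ℝ)
    (hR : ∀ i j, R i j ∈ Set.Icc (0:ℝ) 1) (hC : ∀ i j, C i j ∈ Set.Icc (0:ℝ) 1)
    (xs : Fin (m+1) → ℝ) (ys : Fin (n+1) → ℝ) (ρs : ℝ) (ws : Fin (m+1) → ℝ) (zs : Fin (n+1) → ℝ)
    (hxs : xs ∈ Δ (m+1)) (hys : ys ∈ Δ (n+1))
    (hstat : IsStationary R C xs ys)
    (hdual : IsDualSolution R C xs ys ρs ws zs)
    (hρ : ρs ∈ Set.Ioo (0:ℝ) 1) :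
    (∀ β ∈ Set.Icc (0:ℝ) 1,
      ((∃ a c : ℝ, ∀ α ∈ Set.Icc (0:ℝ) 1,
          fC C (α • ws + (1 - α) • xs) (β • zs + (1 - β) • ys) = a * α + c) ↔
        (SC C xs ∩ SC C ws).Nonempty)) ∧
    (∀ α ∈ Set.Icc (0:ℝ) 1,
      ((∃ a c : ℝ, ∀ β ∈ Set.Icc (0:ℝ) 1,
          fR R (α • ws + (1 - α) • xs) (β • zs + (1 - β) • ys) = a * β + c) ↔
        (SR R ys ∩ SR R zs).Nonempty)) := by
  constructor
  · intro β hβ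
    set q : Fin (n+1) → ℝ := β • zs + (1 - β) • ys with hq
    set U : Fin (n+1) → ℝ := Matrix.vecMul xs C with hU
    set V : Fin (n+1) → ℝ := Matrix.vecMul ws C with hV
    set A : ℝ := ws ⬝ᵥ C.mulVec q with hA
    set B : ℝ := xs ⬝ᵥ C.mulVec q with hB
    have hfc : ∀ t : ℝ, fC C (t • ws + (1 - t) • xs) q
        = vmax (t • V + (1 - t) • U) - (t * A + (1 - t) * B) := by
      intro t
      unfold fC
      have h1 : Matrix.vecMul (t • ws + (1 - t) • xs) C = t • V + (1 - t) • U := by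
        rw [Matrix.add_vecMul, Matrix.smul_vecMul, Matrix.smul_vecMul]
      have h2 : (t • ws + (1 - t) • xs) ⬝ᵥ C.mulVec q = t * A + (1 - t) * B := by
        rw [add_dotProduct, smul_dotProduct, smul_dotProduct, smul_eq_mul, smul_eq_mul]
      rw [h1, h2]
    have hSC : SC C xs ∩ SC C ws = suppmax U ∩ suppmax V := rfl
    rw [hSC]
    refine Iff.trans ?_ (affine_iff U V)
    constructor
    · rintro ⟨a, c, h⟩
      refine ⟨a + A - B, c + B, fun t ht => ?_⟩
      have h' := h t ht
      rw [hfc t] at h'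
      nlinarith [h']
    · rintro ⟨a, c, h⟩
      refine ⟨a - A + B, c - B, fun t ht => ?_⟩
      have h' := h t ht
      rw [hfc t]
      nlinarith [h']
  · intro α hα
    set p : Fin (m+1) → ℝ := α • ws + (1 - α) • xs with hp
    set U : Fin (m+1) → ℝ := R.mulVec ys with hU
    set V : Fin (m+1) → ℝ := R.mulVec zs with hV
    set A : ℝ := p ⬝ᵥ V with hA
    set B : ℝ := p ⬝ᵥ U with hB
    have hfr : ∀ t : ℝ, fR R p (t • zs + (1 - t) • ys)
        = vmax (t • V + (1 - t) • U) - (t * A + (1 - t) * B) := by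
      intro t
      unfold fR
      have h1 : R.mulVec (t • zs + (1 - t) • ys) = t • V + (1 - t) • U := by
        rw [Matrix.mulVec_add, Matrix.mulVec_smul, Matrix.mulVec_smul]
      have h2 : p ⬝ᵥ (t • V + (1 - t) • U) = t * A + (1 - t) * B := by
        rw [dotProduct_add, dotProduct_smul, dotProduct_smul, smul_eq_mul, smul_eq_mul]
      rw [h1, h2]
    have hSR : SR R ys ∩ SR R zs = suppmax U ∩ suppmax V := rfl
    rw [hSR]
    refine Iff.trans ?_ (affine_iff U V)
    constructor
    · rintro ⟨a, c, h⟩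
      refine ⟨a + A - B, c + B, fun t ht => ?_⟩
      have h' := h t ht
      rw [hfr t] at h'
      nlinarith [h']
    · rintro ⟨a, c, h⟩
      refine ⟨a - A + B, c - B, fun t ht => ?_⟩
      have h' := h t ht
      rw [hfr t]
      nlinarith [h']


end TS
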